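/- arXiv:1502.07419 — 7 statements merged into one kernel-verified Lean document; each statement's English description precedes it below -/
import Mathlib

section
/- Let 𝔤 be a nilpotent Lie algebra over ℝ and X, Y ∈ 𝔤. If [X,Y] lies in the span of X and Y, then [X,Y] = 0. -/
/-! Write `Z = ⁅X, Y⁆ = a • X + b • Y`. Then `ad X` and `ad Y` act on `Z` by the scalars `b` and `-a`,
and a nilpotent endomorphism has no eigenvector with a nonzero eigenvalue, so `Z = 0` unless
`a = b = 0`, in which case `Z = 0` anyway. -/

theorem IsNilpotent.eq_zero_or_eq_zero_of_apply_eq_smul {R M : Type*} [CommRing R] [IsDomain R]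
    [AddCommGroup M] [Module R M] [Module.IsTorsionFree R M] {f : Module.End R M}
    (hf : IsNilpotent f) {c : R} {v : M} (hv : f v = c • v) : c = 0 ∨ v = 0 := by
  refine or_iff_not_imp_right.mpr fun hv₀ => ?_
  have hc : f.HasEigenvalue c :=
    Module.End.hasEigenvalue_of_hasEigenvector ⟨Module.End.mem_eigenspace_iff.mpr hv, hv₀⟩
  exact (hc.isNilpotent_of_isNilpotent hf).eq_zero

theorem LieAlgebra.eq_zero_or_eq_zero_of_lie_eq_smul {R L : Type*} [CommRing R] [IsDomain R]
    [LieRing L] [LieAlgebra R L] [Module.IsTorsionFree R L] [LieRing.IsNilpotent L]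
    {x z : L} {c : R} (h : ⁅x, z⁆ = c • z) : c = 0 ∨ z = 0 :=
  (LieModule.isNilpotent_toEnd_of_isNilpotent R L L x).eq_zero_or_eq_zero_of_apply_eq_smul h

theorem stmt_0_general (L : Type*) [LieRing L] [LieAlgebra ℝ L]
    [LieRing.IsNilpotent L] (X Y : L)
    (h : ⁅X, Y⁆ ∈ Submodule.span ℝ ({X, Y} : Set L)) : ⁅X, Y⁆ = 0 := by
  obtain ⟨a, b, hab⟩ := Submodule.mem_span_pair.mp h
  have hX : ⁅X, ⁅X, Y⁆⁆ = b • ⁅X, Y⁆ := by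
    conv_lhs => rw [← hab]
    rw [lie_add, lie_smul, lie_smul, lie_self, smul_zero, zero_add]
  have hY : ⁅Y, ⁅X, Y⁆⁆ = (-a) • ⁅X, Y⁆ := by
    conv_lhs => rw [← hab]
    rw [lie_add, lie_smul, lie_smul, lie_self, smul_zero, add_zero, ← lie_skew, smul_neg, neg_smul]
  rcases LieAlgebra.eq_zero_or_eq_zero_of_lie_eq_smul hX with hb | hZ
  · rcases LieAlgebra.eq_zero_or_eq_zero_of_lie_eq_smul hY with ha | hZ
    · rw [← hab, neg_eq_zero.mp ha, hb, zero_smul, zero_smul, add_zero]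
    · exact hZ
  · exact hZ

theorem stmt_0 (L : Type*) [LieRing L] [LieAlgebra ℝ L] [FiniteDimensional ℝ L]
    [LieRing.IsNilpotent L] (X Y : L)
    (h : ⁅X, Y⁆ ∈ Submodule.span ℝ ({X, Y} : Set L)) : ⁅X, Y⁆ = 0 :=
  stmt_0_general L X Y h
end

section
/- Let 𝔤 be a nilpotent Lie algebra over ℝ and X, Y ∈ 𝔤. If [X,[X,Y]] lies in the span of X, Y, and [X,Y], then [X,[X,Y]] = 0. -/
/-!
Write `T = ad X`, which is nilpotent and kills `X`. Applying `T` to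
`T²Y = aX + bY + cTY` shows that the plane spanned by `TY` and `T²Y` is `T`-invariant; a nilpotent
map on a space of dimension at most two squares to zero, so `T³Y = 0`, and comparing coefficients
leaves `T²Y = aX`. Then `ad [X,Y]` sends `X` to `-aX`, and a nilpotent map has no nonzero
eigenvalue, so `a = 0` or `X = 0`.
-/

open Module

namespace Module.End

variable {K V : Type*} [Field K] [AddCommGroup V] [Module K V]

theorem pow_finrank_eq_zero_of_isNilpotent [FiniteDimensional K V] {φ : End K V}
    (h : IsNilpotent φ) : φ ^ finrank K V = 0 := by
  simpa [h.charpoly_eq_X_pow_finrank] using φ.aeval_self_charpoly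

theorem apply_apply_eq_zero_of_mem_span_pair {T : End K V} (hT : IsNilpotent T) {u : V}
    (h : T (T u) ∈ Submodule.span K {u, T u}) : T (T u) = 0 := by
  set U := Submodule.span K {u, T u}
  have hU : Set.MapsTo T U U := fun x hx ↦ (Submodule.map_span_le T _ U).mpr
    (by rintro m (rfl | rfl) <;> [exact Submodule.subset_span (by simp); exact h]) ⟨x, hx, rfl⟩
  have hdim : finrank K U ≤ 2 := by
    classical
    refine (finrank_span_le_card _).trans ?_
    rw [Set.toFinset_insert, Set.toFinset_singleton]
    exact Finset.card_le_two
  have : FiniteDimensional K U := FiniteDimensional.span_of_finite K (Set.toFinite _)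
  have hsq : T.restrict hU ^ 2 = 0 :=
    pow_eq_zero_of_le hdim (pow_finrank_eq_zero_of_isNilpotent (isNilpotent.restrict hU hT))
  exact congr_arg Subtype.val (LinearMap.congr_fun hsq ⟨u, Submodule.subset_span (by simp)⟩)

theorem apply_apply_mem_span_singleton_of_mem_span_insert {T : End K V} (hT : IsNilpotent T)
    {x y : V} (hx : T x = 0) (h : T (T y) ∈ Submodule.span K {x, y, T y}) : T (T y) ∈ K ∙ x := by
  obtain ⟨a, b, c, habc⟩ : ∃ a b c : K, T (T y) = a • x + b • y + c • T y := by
    simpa [Submodule.mem_span_insert, Submodule.mem_span_singleton, eq_comm, add_assoc] using h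
  have hT3 : T (T (T y)) = b • T y + c • T (T y) := by simp [habc, hx]
  have hT3zero : T (T (T y)) = 0 := by
    refine apply_apply_eq_zero_of_mem_span_pair hT ?_
    rw [hT3]
    exact Submodule.add_mem _ (Submodule.smul_mem _ _ (Submodule.subset_span (by simp)))
      (Submodule.smul_mem _ _ (Submodule.subset_span (by simp)))
  have hzero : b • T y + c • T (T y) = 0 := hT3 ▸ hT3zero
  have hb : b • T (T y) = 0 := by simpa [hT3zero] using congr_arg T hzero
  rcases smul_eq_zero.mp hb with rfl | h2
  · rcases (by simpa using hzero : c = 0 ∨ T (T y) = 0) with rfl | h2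
    · simpa [habc] using Submodule.smul_mem _ a (Submodule.mem_span_singleton_self x)
    · simp [h2]
  · simp [h2]

end Module.End

namespace LieAlgebra

theorem lie_lie_eq_zero_of_eq_smul {K L : Type*} [Field K] [LieRing L] [LieAlgebra K L]
    [LieRing.IsNilpotent L] {X Y : L} {a : K} (h : ⁅X, ⁅X, Y⁆⁆ = a • X) : ⁅X, ⁅X, Y⁆⁆ = 0 := by
  rcases eq_or_ne X 0 with rfl | hX
  · simp
  have hEigen : (LieModule.toEnd K L L ⁅X, Y⁆).HasEigenvalue (-a) :=
    Module.End.hasEigenvalue_of_hasEigenvector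
      ⟨Module.End.mem_eigenspace_iff.mpr <| by
        rw [LieModule.toEnd_apply_apply, ← lie_skew, h, neg_smul], hX⟩
  have ha : a = 0 := neg_eq_zero.mp
    (hEigen.isNilpotent_of_isNilpotent (LieModule.isNilpotent_toEnd_of_isNilpotent K L L _)).eq_zero
  simp [h, ha]

end LieAlgebra

theorem stmt_1_general (L : Type*) [LieRing L] [LieAlgebra ℝ L]
    [LieRing.IsNilpotent L] (X Y : L)
    (h : ⁅X, ⁅X, Y⁆⁆ ∈ Submodule.span ℝ ({X, Y, ⁅X, Y⁆} : Set L)) : ⁅X, ⁅X, Y⁆⁆ = 0 := by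
  obtain ⟨a, ha⟩ := Submodule.mem_span_singleton.mp <|
    Module.End.apply_apply_mem_span_singleton_of_mem_span_insert (T := LieModule.toEnd ℝ L L X)
      (LieModule.isNilpotent_toEnd_of_isNilpotent ℝ L L X) (lie_self X) h
  exact LieAlgebra.lie_lie_eq_zero_of_eq_smul ha.symm

theorem stmt_1 (L : Type*) [LieRing L] [LieAlgebra ℝ L] [FiniteDimensional ℝ L]
    [LieRing.IsNilpotent L] (X Y : L)
    (h : ⁅X, ⁅X, Y⁆⁆ ∈ Submodule.span ℝ ({X, Y, ⁅X, Y⁆} : Set L)) : ⁅X, ⁅X, Y⁆⁆ = 0 :=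
  stmt_1_general L X Y h
end

section
/- Let 𝔤 be a nilpotent Lie algebra and X, Y ∈ 𝔤 with [X,[X,Y]] ≠ 0. Then the four vectors X, Y, [X,Y], [X,[X,Y]] are linearly independent. -/
/-!
Write `T = ad X`. If `p(T) v = 0` for a nilpotent `T` and `T ^ k v ≠ 0`, then the coefficients
of `p` of degree `≤ k` vanish: a polynomial with nonzero constant term evaluates at `T` to a unit
plus a nilpotent, hence to a unit.

Applying `T` to a relation `a X + b Y + c [X, Y] + d [X, [X, Y]] = 0` kills `X` and leaves
`(b T + c T² + d T³) Y = 0`, so `b = c = 0` because `T² Y ≠ 0`. The remaining relation reads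
`(a - d · ad [X, Y]) X = 0`, and nilpotency of `ad [X, Y]` forces `a = 0`, whence `d = 0`.
-/

open Polynomial

namespace Module.End

variable {K M : Type*} [Field K] [AddCommGroup M] [Module K M] {T : Module.End K M}

theorem coeff_zero_eq_zero_of_aeval_apply_eq_zero (hT : IsNilpotent T) {p : K[X]} {v : M}
    (hp : aeval T p v = 0) (hv : v ≠ 0) : p.coeff 0 = 0 := by
  by_contra hc
  have hunit : IsUnit (aeval T p) := by
    rw [← divX_mul_X_add p, map_add, map_mul, aeval_C]
    refine IsNilpotent.isUnit_add_right_of_commute ?_ ((isUnit_iff_ne_zero.mpr hc).map _)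
      (Algebra.commutes _ _).symm
    exact ((Commute.all p.divX X).map (aeval T)).isNilpotent_mul_left (by rwa [aeval_X])
  exact hv ((isUnit_iff _).mp hunit |>.injective (hp.trans (map_zero _).symm))

theorem coeff_eq_zero_of_aeval_apply_eq_zero (hT : IsNilpotent T) {p : K[X]} {v : M}
    (hp : aeval T p v = 0) {k : ℕ} (hk : (T ^ k) v ≠ 0) {i : ℕ} (hi : i ≤ k) :
    p.coeff i = 0 := by
  induction k generalizing p v i with
  | zero =>
    rw [Nat.le_zero.mp hi]
    exact coeff_zero_eq_zero_of_aeval_apply_eq_zero hT hp (by simpa using hk)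
  | succ k ih =>
    have h0 : p.coeff 0 = 0 :=
      coeff_zero_eq_zero_of_aeval_apply_eq_zero hT hp fun hv ↦ hk (by rw [hv, map_zero])
    rcases i with _ | i
    · exact h0
    rw [← coeff_divX]
    refine ih (v := T v) ?_ (by rwa [← mul_apply, ← pow_succ]) (by omega)
    rwa [← divX_mul_X_add p, h0, map_zero, add_zero, map_mul, aeval_X, mul_apply] at hp

end Module.End

theorem stmt_3_general (L : Type*) [LieRing L] [LieAlgebra ℝ L]
    [LieModule.IsNilpotent L L] (X Y : L) (h : ⁅X, ⁅X, Y⁆⁆ ≠ 0) :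
    LinearIndependent ℝ ![X, Y, ⁅X, Y⁆, ⁅X, ⁅X, Y⁆⁆] := by
  obtain ⟨m, hm⟩ := LieAlgebra.nilpotent_ad_of_nilpotent_algebra ℝ L
  have hX : X ≠ 0 := by rintro rfl; simp at h
  rw [Fintype.linearIndependent_iff]
  intro g hg
  simp only [Fin.sum_univ_four, Matrix.cons_val] at hg
  have hcoeff (i : ℕ) (hi : i ≤ 2) :
      (C (g 1) * Polynomial.X + C (g 2) * Polynomial.X ^ 2 + C (g 3) * Polynomial.X ^ 3).coeff i
        = 0 := by
    refine Module.End.coeff_eq_zero_of_aeval_apply_eq_zero (T := LieAlgebra.ad ℝ L X) (v := Y) ⟨m, hm X⟩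
      ?_ (k := 2) (by simpa [pow_succ] using h) hi
    simpa [pow_succ, lie_add, lie_smul] using congrArg (⁅X, ·⁆) hg
  have h1 : g 1 = 0 := by simpa using hcoeff 1
  have h2 : g 2 = 0 := by simpa [coeff_X] using hcoeff 2
  rw [h1, h2] at hg
  have h0 : g 0 = 0 := by
    have := Module.End.coeff_zero_eq_zero_of_aeval_apply_eq_zero (T := LieAlgebra.ad ℝ L ⁅X, Y⁆)
      (p := C (g 0) - C (g 3) * Polynomial.X) ⟨m, hm _⟩ ?_ hX
    · simpa using this
    simp only [map_sub, aeval_C, map_mul, aeval_X, LinearMap.sub_apply, Module.End.mul_apply,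
      Module.algebraMap_end_apply, LieAlgebra.ad_apply]
    rw [← lie_skew, smul_neg, sub_neg_eq_add]
    simpa using hg
  have h3 : g 3 = 0 := by simpa [h0, h] using hg
  intro i
  fin_cases i <;> assumption

theorem stmt_3 (L : Type*) [LieRing L] [LieAlgebra ℝ L] [FiniteDimensional ℝ L]
    [LieModule.IsNilpotent L L] (X Y : L) (h : ⁅X, ⁅X, Y⁆⁆ ≠ 0) :
    LinearIndependent ℝ ![X, Y, ⁅X, Y⁆, ⁅X, ⁅X, Y⁆⁆] :=
  stmt_3_general L X Y h
end

section
/- Let 𝔤 be a nilpotent Lie algebra, X ∈ 𝔤, and suppose there is a nonzero vector P ∈ 𝔤 and a linear functional θ on 𝔤 such that [X,Z] = θ(Z)·P for all Z ∈ 𝔤 and θ is not identically zero. Then [P,U] = 0 for all U ∈ ker θ. -/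
/-!
Pick `W` with `θ W = 1`. For `U ∈ ker θ`, the Jacobi identity gives
`⁅U, P⁆ = ⁅X, ⁅U, W⁆⁆ - ⁅⁅X, U⁆, W⁆ = θ ⁅U, W⁆ • P`, so `P` is an eigenvector of `ad U`.
Since `ad U` is nilpotent, the eigenvalue vanishes and `⁅U, P⁆ = 0`.
-/

namespace LieModule

variable {R L M : Type*} [CommRing R] [IsDomain R] [LieRing L] [LieAlgebra R L]
  [AddCommGroup M] [Module R M] [Module.IsTorsionFree R M] [LieRingModule L M] [LieModule R L M]

lemma lie_eq_zero_of_lie_eq_smul [IsNilpotent L M] {x : L} {m : M} {c : R}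
    (h : ⁅x, m⁆ = c • m) : ⁅x, m⁆ = 0 := by
  rcases eq_or_ne m 0 with rfl | hm
  · exact lie_zero x
  have hc : _root_.IsNilpotent c :=
    Module.End.HasEigenvalue.isNilpotent_of_isNilpotent (isNilpotent_toEnd_of_isNilpotent R L M x)
      (Module.End.hasEigenvalue_of_hasEigenvector ⟨Module.End.mem_eigenspace_iff.mpr h, hm⟩)
  rw [h, hc.eq_zero, zero_smul]

end LieModule

lemma lie_eq_smul_of_forall_lie_eq_smul {R L : Type*} [CommRing R] [LieRing L] [LieAlgebra R L]
    {X P U W : L} {θ : L →ₗ[R] R} (h : ∀ Z : L, ⁅X, Z⁆ = θ Z • P) (hU : θ U = 0) (hW : θ W = 1) :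
    ⁅U, P⁆ = θ ⁅U, W⁆ • P := by
  have jacobi : ⁅X, ⁅U, W⁆⁆ = ⁅⁅X, U⁆, W⁆ + ⁅U, ⁅X, W⁆⁆ := leibniz_lie X U W
  rwa [h, h U, h W, hU, hW, one_smul, zero_smul, zero_lie, zero_add, eq_comm] at jacobi

theorem stmt_6_general (L : Type*) [LieRing L] [LieAlgebra ℝ L]
    [LieRing.IsNilpotent L] (X P : L) (θ : L →ₗ[ℝ] ℝ)
    (hθ : θ ≠ 0) (h : ∀ Z : L, ⁅X, Z⁆ = θ Z • P) :
    ∀ U : L, θ U = 0 → ⁅P, U⁆ = 0 := by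
  intro U hU
  obtain ⟨W, hW⟩ := LinearMap.surjective_of_ne_zero hθ 1
  have hUP := lie_eq_smul_of_forall_lie_eq_smul h hU hW
  rw [← lie_skew, LieModule.lie_eq_zero_of_lie_eq_smul hUP, neg_zero]

theorem stmt_6 (L : Type*) [LieRing L] [LieAlgebra ℝ L] [FiniteDimensional ℝ L]
    [LieRing.IsNilpotent L] (X P : L) (θ : L →ₗ[ℝ] ℝ)
    (hP : P ≠ 0) (hθ : θ ≠ 0) (h : ∀ Z : L, ⁅X, Z⁆ = θ Z • P) :
    ∀ U : L, θ U = 0 → ⁅P, U⁆ = 0 :=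
  stmt_6_general L X P θ hθ h
end

section
/- Let 𝔤 be a nonabelian nilpotent Lie algebra such that for every triple (X₁,X₂,X₃) ∈ 𝔤³ the subspace spanned by X₁, X₂, X₃, [X₁,X₂], [X₁,X₃], [X₂,X₃] has dimension at most 4. Then 𝔤 is either two-step nilpotent or has a codimension one abelian ideal. -/
/-!
If `⁅⁅a, b⁆, b⁆ = 0` for all `a, b`, polarisation makes `⁅⁅a, b⁆, c⁆` alternating, and the Jacobi
identity becomes `3 ⁅⁅a, b⁆, c⁆ = 0`.

Otherwise pick `x, y` with `w = ⁅⁅x, y⁆, y⁆ ≠ 0` and put `z = ⁅x, y⁆`. Nilpotency enters only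
through one fact: if `f` is nilpotent and `W` is `f`-invariant, a vector in
`W + span {f x, f² x, …}` lies in `W`. Applied to `ad y` it makes `x, z, w, y` independent, and the
dimension bound then puts every further bracket of a triple into the span of four independent
vectors that the triple already generates. Playing these two facts against each other gives
`⁅w, y⁆ = 0`, allows replacing `x` by `x + c y` with `⁅x, z⁆ = ⁅x, w⁆ = 0`, and shows that
`x, z, w, y` span the algebra, so that `span {x, z, w}` is an abelian ideal of codimension one.
-/

open Submodule Module

section Nilpotent

variable {R M : Type*} [Semiring R] [AddCommMonoid M] [Module R M] {f : Module.End R M}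

theorem Submodule.le_of_le_map_sup_of_isNilpotent (hf : IsNilpotent f) {S W : Submodule R M}
    (hW : W ≤ W.comap f) (hS : S ≤ S.map f ⊔ W) : S ≤ W := by
  obtain ⟨n, hn⟩ := hf
  have key : ∀ k : ℕ, S ≤ S.map (f ^ k) ⊔ W := by
    intro k
    induction k with
    | zero => simp [Module.End.one_eq_id]
    | succ k ih =>
      calc S ≤ S.map f ⊔ W := hS
        _ ≤ (S.map (f ^ k) ⊔ W).map f ⊔ W := sup_le_sup_right (map_mono ih) _
        _ = S.map (f ^ (k + 1)) ⊔ (W.map f ⊔ W) := by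
          rw [map_sup, sup_assoc, pow_succ', Module.End.mul_eq_comp, map_comp]
        _ = S.map (f ^ (k + 1)) ⊔ W := by rw [sup_eq_right.mpr (map_le_iff_le_comap.mpr hW)]
  simpa [hn] using key n

theorem Submodule.mem_of_mem_span_iterate_sup (hf : IsNilpotent f) {W : Submodule R M}
    (hW : W ≤ W.comap f) {x : M}
    (hx : x ∈ span R (Set.range fun n : ℕ => (f ^ (n + 1)) x) ⊔ W) : x ∈ W := by
  set S := span R (Set.range fun n : ℕ => (f ^ n) x)
  have hmap : span R (Set.range fun n : ℕ => (f ^ (n + 1)) x) = S.map f := by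
    rw [map_span, ← Set.range_comp]
    simp [Function.comp_def, pow_succ']
  have hS : S ≤ S.map f ⊔ W := by
    rw [span_le, ← hmap]
    rintro _ ⟨_ | n, rfl⟩
    · simpa using hx
    · exact mem_sup_left (subset_span ⟨n, rfl⟩)
  exact le_of_le_map_sup_of_isNilpotent hf hW hS (subset_span ⟨0, by simp⟩)

end Nilpotent

theorem Matrix.range_cons_cons {α : Type*} {n : ℕ} (a b : α) (v : Fin n → α) :
    Set.range (Matrix.vecCons a (Matrix.vecCons b v)) =
      insert a (Set.range (Matrix.vecCons b v)) := by
  rw [Matrix.range_cons a, Set.singleton_union]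

section LinearAlgebra

variable {K V : Type*} [Field K] [AddCommGroup V] [Module K V]

theorem linearIndependent_vecCons_iff {n : ℕ} {v : Fin n → V} {a : V} :
    LinearIndependent K (Matrix.vecCons a v) ↔ LinearIndependent K v ∧ a ∉ span K (Set.range v) :=
  linearIndependent_finCons

variable {ι : Type*} [Fintype ι] {v : ι → V} {s : Set V}

theorem LinearIndependent.card_le_finrank_span (hv : LinearIndependent K v) (hs : s.Finite)
    (hvs : Set.range v ⊆ span K s) : Fintype.card ι ≤ finrank K (span K s) :=
  haveI := FiniteDimensional.span_of_finite K hs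
  (finrank_span_eq_card hv).symm.trans_le (finrank_mono (span_le.mpr hvs))

theorem LinearIndependent.span_range_eq_of_finrank_le (hv : LinearIndependent K v)
    (hs : s.Finite) (hvs : Set.range v ⊆ span K s)
    (hle : finrank K (span K s) ≤ Fintype.card ι) : span K (Set.range v) = span K s :=
  haveI := FiniteDimensional.span_of_finite K hs
  eq_of_le_of_finrank_le (span_le.mpr hvs) (by rwa [finrank_span_eq_card hv])

theorem LinearIndependent.finrank_span_triple_add_one {a b c d : V}
    (h : LinearIndependent K ![a, b, c, d]) :
    finrank K (span K {a, b, c}) + 1 = finrank K (span K {a, b, c, d}) := by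
  have h₃ : LinearIndependent K ![a, b, c] := by
    convert h.comp ![0, 1, 2] (by decide) using 1
    ext i
    fin_cases i <;> rfl
  have e₃ := finrank_span_eq_card h₃
  have e₄ := finrank_span_eq_card h
  rw [Matrix.range_cons_cons, Matrix.range_cons_cons, Matrix.range_cons_empty] at e₃
  rw [Matrix.range_cons_cons, Matrix.range_cons_cons, Matrix.range_cons_cons,
    Matrix.range_cons_empty] at e₄
  rw [e₃, e₄]
  rfl

end LinearAlgebra

theorem lie_mem_of_mem_span {R L : Type*} [CommRing R] [LieRing L] [LieAlgebra R L]
    {s t : Set L} {N : Submodule R L} (h : ∀ a ∈ s, ∀ b ∈ t, ⁅a, b⁆ ∈ N) {a b : L}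
    (ha : a ∈ span R s) (hb : b ∈ span R t) : ⁅a, b⁆ ∈ N := by
  induction ha, hb using span_induction₂ with
  | mem_mem a b ha hb => exact h a ha b hb
  | zero_left b _ => simp
  | zero_right a _ => simp
  | add_left a₁ a₂ b _ _ _ h₁ h₂ => rw [add_lie]; exact add_mem h₁ h₂
  | add_right a b₁ b₂ _ _ _ h₁ h₂ => rw [lie_add]; exact add_mem h₁ h₂
  | smul_left r a b _ _ h => rw [smul_lie]; exact smul_mem _ r h
  | smul_right r a b _ _ h => rw [lie_smul]; exact smul_mem _ r h

section LieAlgebra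

variable {K L : Type*} [Field K] [LieRing L] [LieAlgebra K L]

theorem lie_lie_eq_zero_of_lie_lie_self_eq_zero [NeZero (3 : K)]
    (h : ∀ a b : L, ⁅⁅a, b⁆, b⁆ = 0) (x y z : L) : ⁅x, ⁅y, z⁆⁆ = 0 := by
  have alt : ∀ a b c : L, ⁅⁅a, b⁆, c⁆ = -⁅⁅a, c⁆, b⁆ := fun a b c => by
    have := h a (b + c)
    simp only [lie_add, add_lie, h, zero_add, add_zero] at this
    exact eq_neg_of_add_eq_zero_right this
  have cyc : ∀ a b c : L, ⁅⁅a, b⁆, c⁆ = ⁅⁅b, c⁆, a⁆ := fun a b c => by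
    rw [alt a b c, ← lie_skew a c, neg_lie, neg_neg, alt c a b, ← lie_skew c b, neg_lie, neg_neg]
  have skew : ∀ p q : L, ⁅p, q⁆ = -⁅q, p⁆ := fun p q => (lie_skew p q).symm
  have h3 : (3 : K) • ⁅⁅y, z⁆, x⁆ = 0 := by
    have := lie_jacobi x y z
    rw [skew x, skew y ⁅z, x⁆, skew z ⁅x, y⁆, cyc z x y, cyc x y z] at this
    linear_combination (norm := module) -this
  rw [skew, (smul_eq_zero.mp h3).resolve_left three_ne_zero, neg_zero]

theorem exists_abelian_lieIdeal_of_span_eq_top {x y z w : L} (hz : ⁅x, y⁆ = z)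
    (hw : ⁅z, y⁆ = w) (hxz : ⁅x, z⁆ = 0) (hxw : ⁅x, w⁆ = 0) (hwy : ⁅w, y⁆ = 0)
    (hli : LinearIndependent K ![x, z, w, y]) (htop : span K {x, z, w, y} = ⊤) :
    ∃ 𝔞 : LieIdeal K L, (∀ a ∈ 𝔞, ∀ b ∈ 𝔞, ⁅a, b⁆ = 0) ∧ finrank K 𝔞 + 1 = finrank K L := by
  have swap : ∀ a b : L, ⁅a, b⁆ = 0 → ⁅b, a⁆ = 0 := fun a b h => by rw [← lie_skew, h, neg_zero]
  have hyw := swap _ _ hwy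
  have hzw : ⁅z, w⁆ = 0 := by simpa [hz, hyw, hxw] using lie_lie x y w
  have hab : ∀ a ∈ span K {x, z, w}, ∀ b ∈ span K {x, z, w}, ⁅a, b⁆ = 0 := by
    refine fun a ha b hb => (mem_bot K).mp (lie_mem_of_mem_span ?_ ha hb)
    simp only [Set.mem_insert_iff, Set.mem_singleton_iff]
    rintro a (rfl | rfl | rfl) b (rfl | rfl | rfl) <;>
      simp [hxz, hxw, hzw, swap _ _ hxz, swap _ _ hxw, swap _ _ hzw]
  let 𝔞 : LieIdeal K L :=
    { span K {x, z, w} with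
      lie_mem := fun {g m} hm => by
        refine lie_mem_of_mem_span (s := {x, z, w, y}) (fun a ha b hb => ?_)
          (htop ▸ mem_top : g ∈ _) hm
        by_cases ha' : a ∈ ({x, z, w} : Set L)
        · rw [hab a (subset_span ha') b (subset_span hb)]
          exact zero_mem _
        obtain rfl : a = y := by
          simp only [Set.mem_insert_iff, Set.mem_singleton_iff] at ha ha'
          tauto
        simp only [Set.mem_insert_iff, Set.mem_singleton_iff] at hb
        rcases hb with rfl | rfl | rfl
        · rw [← lie_skew, hz]
          exact neg_mem (subset_span (by simp))
        · rw [← lie_skew, hw]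
          exact neg_mem (subset_span (by simp))
        · rw [hyw]
          exact zero_mem _ }
  refine ⟨𝔞, hab, ?_⟩
  rw [← finrank_top K L, ← htop]
  exact hli.finrank_span_triple_add_one

end LieAlgebra

def TripleSpanFinrankLE (K L : Type*) [Field K] [LieRing L] [LieAlgebra K L] (n : ℕ) : Prop :=
  ∀ X₁ X₂ X₃ : L, finrank K (span K {X₁, X₂, X₃, ⁅X₁, X₂⁆, ⁅X₁, X₃⁆, ⁅X₂, X₃⁆}) ≤ n

namespace TripleSpanFinrankLE

variable {K L : Type*} [Field K] [LieRing L] [LieAlgebra K L] {X₁ X₂ X₃ : L}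

theorem card_le {n : ℕ} (hdim : TripleSpanFinrankLE K L n) {ι : Type*} [Fintype ι] {v : ι → L}
    (hv : LinearIndependent K v)
    (hvs : Set.range v ⊆ span K {X₁, X₂, X₃, ⁅X₁, X₂⁆, ⁅X₁, X₃⁆, ⁅X₂, X₃⁆}) :
    Fintype.card ι ≤ n :=
  (hv.card_le_finrank_span (Set.toFinite _) hvs).trans (hdim X₁ X₂ X₃)

theorem subset_span_of_linearIndependent (hdim : TripleSpanFinrankLE K L 4) {a b c d : L}
    (hli : LinearIndependent K ![a, b, c, d])
    (habcd : ({a, b, c, d} : Set L) ⊆ span K {X₁, X₂, X₃, ⁅X₁, X₂⁆, ⁅X₁, X₃⁆, ⁅X₂, X₃⁆}) :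
    ({X₁, X₂, X₃, ⁅X₁, X₂⁆, ⁅X₁, X₃⁆, ⁅X₂, X₃⁆} : Set L) ⊆ span K {a, b, c, d} := by
  have := hli.span_range_eq_of_finrank_le (Set.toFinite _)
    (by simpa only [Matrix.range_cons_cons, Matrix.range_cons_empty] using habcd)
    (hdim X₁ X₂ X₃)
  simp only [Matrix.range_cons_cons, Matrix.range_cons_empty] at this
  rw [this]
  exact Submodule.subset_span

end TripleSpanFinrankLE

section NilpotentLieAlgebra

variable {K L : Type*} [Field K] [LieRing L] [LieAlgebra K L] [LieRing.IsNilpotent L]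

theorem mem_span_of_mem_span_union_iterates (y : L) {s t : Set L} {x : L}
    (ht : ∀ u ∈ t, ⁅u, y⁆ ∈ span K t) (hs : s ⊆ Set.range fun n : ℕ => (⁅·, y⁆)^[n + 1] x)
    (hx : x ∈ span K (s ∪ t)) : x ∈ span K t := by
  set f := -LieModule.toEnd K L L y
  have hf : IsNilpotent f := (LieModule.isNilpotent_toEnd_of_isNilpotent K L L y).neg
  have hfy : ⇑f = (⁅·, y⁆) := funext fun u => by simp [f]
  refine mem_of_mem_span_iterate_sup hf (span_le.mpr fun u hu => by simpa [hfy] using ht u hu) ?_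
  have hs' : span K s ≤ span K (Set.range fun n : ℕ => (f ^ (n + 1)) x) :=
    span_mono (by simpa [Module.End.pow_apply, hfy] using hs)
  rw [span_union] at hx
  exact sup_le_sup_right hs' _ hx

theorem eq_zero_of_lie_eq_smul {u y : L} {μ : K} (hμ : μ ≠ 0) (h : ⁅u, y⁆ = μ • u) : u = 0 := by
  have hu : u ∈ span K ({⁅u, y⁆} ∪ ∅) := by
    rw [h, Set.union_empty, span_singleton_smul_eq hμ.isUnit]
    exact mem_span_singleton_self u
  simpa using mem_span_of_mem_span_union_iterates y (by simp)
    (Set.singleton_subset_iff.mpr ⟨0, rfl⟩) hu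

variable {x y z w : L}

theorem linearIndependent_of_lie_lie_ne_zero (hz : ⁅x, y⁆ = z) (hw : ⁅z, y⁆ = w) (h : w ≠ 0) :
    LinearIndependent K ![x, z, w, y] := by
  have hy_inv : ∀ u ∈ ({y} : Set L), ⁅u, y⁆ ∈ K ∙ y := by simp
  have hy : y ≠ 0 := by rintro rfl; simp [← hw] at h
  have hwy : w ∉ K ∙ y := by
    intro hwy
    obtain ⟨a, rfl⟩ := mem_span_singleton.mp hwy
    have ha : a ≠ 0 := by rintro rfl; simp at h
    exact hy (eq_zero_of_lie_eq_smul (neg_ne_zero.mpr ha) (by rw [← lie_skew, hw, neg_smul]))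
  have hzwy : z ∉ span K {w, y} := by
    intro hzwy
    obtain ⟨a, rfl⟩ := mem_span_singleton.mp <| mem_span_of_mem_span_union_iterates y hy_inv
      (s := {w}) (Set.singleton_subset_iff.mpr ⟨0, hw⟩) hzwy
    exact hwy (by simp [← hw])
  have hxzwy : x ∉ span K {z, w, y} := by
    intro hxzwy
    obtain ⟨a, rfl⟩ := mem_span_singleton.mp <| mem_span_of_mem_span_union_iterates y hy_inv
      (s := {z, w}) (Set.pair_subset ⟨0, hz⟩ ⟨1, by simp [hz, hw]⟩)
      (by rwa [Set.insert_union, Set.singleton_union])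
    exact hzwy (by simp [← hz])
  simp only [linearIndependent_vecCons_iff, Matrix.range_cons_cons, Matrix.range_cons_empty]
  simp [hy, hwy, hzwy, hxzwy]

theorem lie_eq_zero_of_lie_lie_ne_zero (hdim : TripleSpanFinrankLE K L 4) (hz : ⁅x, y⁆ = z)
    (hw : ⁅z, y⁆ = w) (h : w ≠ 0) : ⁅w, y⁆ = 0 := by
  by_contra h'
  have hA := linearIndependent_of_lie_lie_ne_zero (K := K) hz hw h
  have hB := linearIndependent_of_lie_lie_ne_zero (K := K) hw rfl h'
  have hwy : ⁅w, y⁆ ∈ span K {x, z, w, y} := by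
    rw [← lie_skew]
    refine neg_mem (hdim.subset_span_of_linearIndependent hA (X₁ := x) (X₂ := y) (X₃ := w)
      ?_ (by simp))
    rw [hz]
    exact subset_trans (by simp [Set.insert_subset_iff]) subset_span
  have hV := hB.span_range_eq_of_finrank_le (Set.finite_range ![x, z, w, y])
    (by
      simp only [Matrix.range_cons_cons, Matrix.range_cons_empty, Set.insert_subset_iff,
        Set.singleton_subset_iff]
      exact ⟨subset_span (by simp), subset_span (by simp), hwy, subset_span (by simp)⟩)
    (by rw [finrank_span_eq_card hA])
  simp only [Matrix.range_cons_cons, Matrix.range_cons_empty] at hV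
  have hx : x ∈ span K ({z, w, ⁅w, y⁆} ∪ {y}) := by
    rw [Set.insert_union, Set.insert_union, Set.singleton_union, hV]
    exact subset_span (by simp)
  have hxy : x ∈ K ∙ y := mem_span_of_mem_span_union_iterates y (by simp)
    (Set.insert_subset_iff.mpr ⟨⟨0, hz⟩, Set.pair_subset ⟨1, by simp [hz, hw]⟩
      ⟨2, by simp [hz, hw]⟩⟩) hx
  exact hA.notMem_span_image (s := {3}) (x := 0) (by decide) (by simpa using hxy)

theorem lie_mem_span_pair_of_lie_lie_ne_zero (hdim : TripleSpanFinrankLE K L 4)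
    (hz : ⁅x, y⁆ = z) (hw : ⁅z, y⁆ = w) (h : w ≠ 0) : ⁅x, z⁆ ∈ span K {w, y} ∧ ⁅x, w⁆ = 0 := by
  have hwy := lie_eq_zero_of_lie_lie_ne_zero hdim hz hw h
  have hyw : ⁅y, w⁆ = 0 := by rw [← lie_skew, hwy, neg_zero]
  have hyz : ⁅y, z⁆ = -w := by rw [← lie_skew, hw]
  have hA := linearIndependent_of_lie_lie_ne_zero (K := K) hz hw h
  have hxz : ⁅x, z⁆ ∈ span K {x, z, w, y} := by
    refine hdim.subset_span_of_linearIndependent hA (X₁ := x) (X₂ := y) (X₃ := z) ?_ (by simp)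
    rw [hz, hyz]
    simp only [Set.insert_subset_iff, Set.singleton_subset_iff]
    exact ⟨subset_span (by simp), subset_span (by simp),
      neg_mem_iff.mp (subset_span (by simp)), subset_span (by simp)⟩
  obtain ⟨a, _, hu, hxz⟩ := mem_span_insert.mp hxz
  obtain ⟨b, u, hu', rfl⟩ := mem_span_insert.mp hu
  obtain ⟨c, d, rfl⟩ := mem_span_pair.mp hu'
  have hxw : ⁅x, w⁆ = a • z + b • w := by
    have := lie_lie x z y
    rw [hxz, hw, hz, lie_self, sub_zero] at this
    simpa [add_lie, smul_lie, hz, hw, hwy] using this.symm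
  have hzw : ⁅z, w⁆ = a • w := by
    have := lie_lie x y w
    rw [hz, hyw, hxw, lie_zero, zero_sub, lie_add, lie_smul, lie_smul, hyz, hyw] at this
    simpa using this
  obtain rfl : a = 0 := by
    by_contra ha
    exact h (eq_zero_of_lie_eq_smul (neg_ne_zero.mpr ha) (by rw [← lie_skew, hzw, neg_smul]))
  obtain rfl : b = 0 := by
    by_contra hb
    exact h (eq_zero_of_lie_eq_smul (u := w) (y := x) (neg_ne_zero.mpr hb)
      (by rw [← lie_skew, hxw, zero_smul, zero_add, neg_smul]))
  simp only [zero_smul, zero_add] at hxz hxw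
  exact ⟨hxz ▸ mem_span_pair.mpr ⟨c, d, rfl⟩, hxw⟩

theorem exists_lie_eq_smul_of_lie_lie_ne_zero (hdim : TripleSpanFinrankLE K L 4)
    (hz : ⁅x, y⁆ = z) (hw : ⁅z, y⁆ = w) (h : w ≠ 0) : ∃ c : K, ⁅x, z⁆ = c • w ∧ ⁅x, w⁆ = 0 := by
  obtain ⟨hxz, hxw⟩ := lie_mem_span_pair_of_lie_lie_ne_zero hdim hz hw h
  obtain ⟨c, d, hxz⟩ := mem_span_pair.mp hxz
  refine ⟨c, ?_, hxw⟩
  obtain rfl : d = 0 := by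
    by_contra hd
    have hyxx : ⁅⁅y, x⁆, x⁆ = c • w + d • y := by
      rw [← lie_skew y x, hz, neg_lie, ← lie_skew z x, neg_neg, hxz]
    have hy : y ∈ span K ({⁅⁅y, x⁆, x⁆} ∪ {w}) := by
      refine mem_span_pair.mpr ⟨d⁻¹, -(d⁻¹ * c), ?_⟩
      rw [hyxx]
      match_scalars <;> field_simp
      ring
    have hyw : y ∈ K ∙ w := mem_span_of_mem_span_union_iterates x
      (by simp [← lie_skew w x, hxw]) (Set.singleton_subset_iff.mpr ⟨1, rfl⟩) hy
    exact (linearIndependent_of_lie_lie_ne_zero (K := K) hz hw h).notMem_span_image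
      (s := {2}) (x := 3) (by decide) (by simpa using hyw)
  simpa using hxz.symm

theorem mem_span_of_lie_eq_zero (hdim : TripleSpanFinrankLE K L 4) (hz : ⁅x, y⁆ = z)
    (hw : ⁅z, y⁆ = w) (h : w ≠ 0) {u : L} (hu : ⁅u, y⁆ = 0) : u ∈ span K {x, z, w, y} := by
  by_contra hu'
  have hB : LinearIndependent K ![u, x, z, w, y] :=
    linearIndependent_vecCons_iff.mpr ⟨linearIndependent_of_lie_lie_ne_zero hz hw h,
      by simpa only [Matrix.range_cons_cons, Matrix.range_cons_empty] using hu'⟩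
  have hwu : ⁅u + z, y⁆ = w := by rw [add_lie, hu, hw, zero_add]
  have := hdim.card_le hB (X₁ := u + z) (X₂ := x) (X₃ := y) (by
    simp only [Matrix.range_cons_cons, Matrix.range_cons_empty]
    rw [hz, hwu]
    simp only [Set.insert_subset_iff, Set.singleton_subset_iff]
    refine ⟨?_, subset_span (by simp), subset_span (by simp), subset_span (by simp),
      subset_span (by simp)⟩
    simpa using sub_mem (subset_span (by simp) : u + z ∈ span K _) (subset_span (by simp) : z ∈ _))
  simp at this

theorem lie_mem_span_of_notMem_span (hdim : TripleSpanFinrankLE K L 4) (hz : ⁅x, y⁆ = z)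
    (hw : ⁅z, y⁆ = w) (h : w ≠ 0) {v : L} (hv : v ∉ span K {x, z, w, y}) :
    ⁅v, y⁆ ∈ span K {z, w, y} := by
  have hwy := lie_eq_zero_of_lie_lie_ne_zero hdim hz hw h
  have hv' : v ∉ span K {z, w, y} := fun h' => hv (span_mono (by simp [Set.subset_def]) h')
  have hB : LinearIndependent K ![v, z, w, y] :=
    linearIndependent_vecCons_iff.mpr
      ⟨(linearIndependent_vecCons_iff.mp (linearIndependent_of_lie_lie_ne_zero hz hw h)).1,
        by simpa only [Matrix.range_cons_cons, Matrix.range_cons_empty] using hv'⟩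
  have hvy : ⁅v, y⁆ ∈ span K {v, z, w, y} := by
    refine hdim.subset_span_of_linearIndependent hB (X₁ := v) (X₂ := y) (X₃ := z) ?_ (by simp)
    rw [← hw, ← lie_skew]
    simp only [Set.insert_subset_iff, Set.singleton_subset_iff]
    exact ⟨subset_span (by simp), subset_span (by simp), neg_mem (subset_span (by simp)),
      subset_span (by simp)⟩
  obtain ⟨a, u, hu, hvy⟩ := mem_span_insert.mp hvy
  obtain rfl : a = 0 := by
    by_contra ha
    refine hv' (mem_span_of_mem_span_union_iterates y (s := {⁅v, y⁆}) ?_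
      (Set.singleton_subset_iff.mpr ⟨0, rfl⟩) ?_)
    · simp only [Set.mem_insert_iff, Set.mem_singleton_iff, forall_eq_or_imp, forall_eq, hw,
        hwy, lie_self]
      exact ⟨subset_span (by simp), zero_mem _, zero_mem _⟩
    · rw [Set.singleton_union, mem_span_insert]
      refine ⟨a⁻¹, -(a⁻¹ • u), neg_mem (smul_mem _ _ hu), ?_⟩
      rw [hvy, smul_add, smul_smul, inv_mul_cancel₀ ha, one_smul]
      abel
  simpa [hvy] using hu

theorem span_eq_top_of_lie_lie_ne_zero (hdim : TripleSpanFinrankLE K L 4) (hz : ⁅x, y⁆ = z)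
    (hw : ⁅z, y⁆ = w) (h : w ≠ 0) : span K {x, z, w, y} = ⊤ := by
  refine eq_top_iff'.mpr fun v => by_contra fun hv => ?_
  obtain ⟨b, c, d, hvy⟩ := mem_span_triple.mp (lie_mem_span_of_notMem_span hdim hz hw h hv)
  have huy : ⁅v - b • x - c • z, y⁆ = d • y := by
    rw [sub_lie, sub_lie, smul_lie, smul_lie, ← hvy, hz, hw]
    module
  obtain rfl : d = 0 := by
    by_contra hd
    have hy : y ≠ 0 := by rintro rfl; simp [← hw] at h
    exact hy (eq_zero_of_lie_eq_smul (u := y) (neg_ne_zero.mpr hd)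
      (by rw [← lie_skew, huy, neg_smul]))
  have hu := mem_span_of_lie_eq_zero hdim hz hw h (huy.trans (zero_smul K y))
  have hxV : x ∈ span K {x, z, w, y} := subset_span (by simp)
  have hzV : z ∈ span K {x, z, w, y} := subset_span (by simp)
  refine hv ?_
  convert add_mem (add_mem hu (smul_mem _ b hxV)) (smul_mem _ c hzV) using 1
  abel

theorem exists_abelian_lieIdeal_of_lie_lie_ne_zero (hdim : TripleSpanFinrankLE K L 4)
    {x₀ y : L} (h : ⁅⁅x₀, y⁆, y⁆ ≠ 0) :
    ∃ 𝔞 : LieIdeal K L, (∀ a ∈ 𝔞, ∀ b ∈ 𝔞, ⁅a, b⁆ = 0) ∧ finrank K 𝔞 + 1 = finrank K L := by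
  obtain ⟨z, hz₀⟩ : ∃ z, ⁅x₀, y⁆ = z := ⟨_, rfl⟩
  obtain ⟨w, hw⟩ : ∃ w, ⁅z, y⁆ = w := ⟨_, rfl⟩
  rw [hz₀, hw] at h
  obtain ⟨c, hx₀z, hx₀w⟩ := exists_lie_eq_smul_of_lie_lie_ne_zero hdim hz₀ hw h
  have hwy := lie_eq_zero_of_lie_lie_ne_zero hdim hz₀ hw h
  have hyz : ⁅y, z⁆ = -w := by rw [← lie_skew, hw]
  have hyw : ⁅y, w⁆ = 0 := by rw [← lie_skew, hwy, neg_zero]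
  have hz : ⁅x₀ + c • y, y⁆ = z := by rw [add_lie, smul_lie, lie_self, smul_zero, add_zero, hz₀]
  refine exists_abelian_lieIdeal_of_span_eq_top hz hw ?_ ?_ hwy
    (linearIndependent_of_lie_lie_ne_zero hz hw h) (span_eq_top_of_lie_lie_ne_zero hdim hz hw h)
  · rw [add_lie, smul_lie, hx₀z, hyz, smul_neg, add_neg_cancel]
  · rw [add_lie, smul_lie, hx₀w, hyw, smul_zero, add_zero]

end NilpotentLieAlgebra

theorem stmt_8_general (L : Type*) [LieRing L] [LieAlgebra ℝ L]
    [LieRing.IsNilpotent L]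
    (hdim : ∀ X₁ X₂ X₃ : L,
      Module.finrank ℝ (Submodule.span ℝ
        ({X₁, X₂, X₃, ⁅X₁, X₂⁆, ⁅X₁, X₃⁆, ⁅X₂, X₃⁆} : Set L)) ≤ 4) :
    (∀ X Y Z : L, ⁅X, ⁅Y, Z⁆⁆ = 0) ∨
    (∃ 𝔞 : LieIdeal ℝ L, (∀ x ∈ 𝔞, ∀ y ∈ 𝔞, ⁅x, y⁆ = 0) ∧
      Module.finrank ℝ 𝔞 + 1 = Module.finrank ℝ L) := by
  by_cases h : ∀ a b : L, ⁅⁅a, b⁆, b⁆ = 0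
  · exact Or.inl (lie_lie_eq_zero_of_lie_lie_self_eq_zero (K := ℝ) h)
  · push Not at h
    obtain ⟨x, y, hxy⟩ := h
    exact Or.inr (exists_abelian_lieIdeal_of_lie_lie_ne_zero hdim hxy)

theorem stmt_8 (L : Type*) [LieRing L] [LieAlgebra ℝ L] [FiniteDimensional ℝ L]
    [LieRing.IsNilpotent L]
    (hna : ∃ x y : L, ⁅x, y⁆ ≠ 0)
    (hdim : ∀ X₁ X₂ X₃ : L,
      Module.finrank ℝ (Submodule.span ℝ
        ({X₁, X₂, X₃, ⁅X₁, X₂⁆, ⁅X₁, X₃⁆, ⁅X₂, X₃⁆} : Set L)) ≤ 4) :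
    (∀ X Y Z : L, ⁅X, ⁅Y, Z⁆⁆ = 0) ∨
    (∃ 𝔞 : LieIdeal ℝ L, (∀ x ∈ 𝔞, ∀ y ∈ 𝔞, ⁅x, y⁆ = 0) ∧
      Module.finrank ℝ 𝔞 + 1 = Module.finrank ℝ L) :=
  stmt_8_general L hdim
end

section
/- Let 𝔥 be a two-step nilpotent Lie algebra with a nilpotent derivation D satisfying [DU,U] = 0 for all U ∈ 𝔥, and suppose D[X,Y] = 0 for some X, Y ∈ 𝔥 with [X,Y] ≠ 0. If additionally D²X = D²Y = 0, then for the semidirect extension 𝔤 = ℝc ⋉_D 𝔥 and W = Span(c,X,Y), one has [W,[W,W]] = 0. -/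
theorem stmt_11 (L : Type*) [LieRing L] [LieAlgebra ℝ L] [FiniteDimensional ℝ L]
    (𝔥 : LieIdeal ℝ L) (c : L) (hc : c ∉ 𝔥)
    (hspan : ∀ x : L, ∃ U ∈ 𝔥, ∃ t : ℝ, x = U + t • c)
    (h2step : ∀ U ∈ 𝔥, ∀ V ∈ 𝔥, ∀ W ∈ 𝔥, ⁅U, ⁅V, W⁆⁆ = 0)
    (hDnil : ∃ n : ℕ, ∀ U ∈ 𝔥, ((LieAlgebra.ad ℝ L c) ^ n) U = 0)
    (hD : ∀ U ∈ 𝔥, ⁅⁅c, U⁆, U⁆ = 0)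
    (X Y : L) (hX : X ∈ 𝔥) (hY : Y ∈ 𝔥) (hXY : ⁅X, Y⁆ ≠ 0)
    (hDbr : ⁅c, ⁅X, Y⁆⁆ = 0) (hD2X : ⁅c, ⁅c, X⁆⁆ = 0) (hD2Y : ⁅c, ⁅c, Y⁆⁆ = 0) :
    ∀ w₁ ∈ Submodule.span ℝ ({c, X, Y} : Set L),
    ∀ w₂ ∈ Submodule.span ℝ ({c, X, Y} : Set L),
    ∀ w₃ ∈ Submodule.span ℝ ({c, X, Y} : Set L),
      ⁅w₁, ⁅w₂, w₃⁆⁆ = 0 := by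
  -- polarization of hD
  have hpol : ⁅⁅c, X⁆, Y⁆ + ⁅⁅c, Y⁆, X⁆ = 0 := by
    have h := hD (X + Y) (add_mem hX hY)
    have hXx := hD X hX
    have hYy := hD Y hY
    simp only [lie_add, add_lie] at h
    rw [hXx, hYy] at h
    simpa [add_comm] using h
  -- Leibniz on hDbr
  have hleib : ⁅⁅c, X⁆, Y⁆ + ⁅X, ⁅c, Y⁆⁆ = 0 := by
    rw [← leibniz_lie]; exact hDbr
  have hCXY : ⁅⁅c, X⁆, Y⁆ = 0 := by
    have hs : ⁅X, ⁅c, Y⁆⁆ = -⁅⁅c, Y⁆, X⁆ := by rw [← lie_skew]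
    rw [hs] at hleib
    have ha : ⁅⁅c, X⁆, Y⁆ = -⁅⁅c, Y⁆, X⁆ := eq_neg_of_add_eq_zero_left hpol
    have hb : ⁅⁅c, X⁆, Y⁆ = ⁅⁅c, Y⁆, X⁆ := by
      have := eq_neg_of_add_eq_zero_left hleib
      simpa using this
    have h2 : (2 : ℝ) • ⁅⁅c, X⁆, Y⁆ = 0 := by
      rw [two_smul]
      nth_rewrite 1 [hb]
      rw [ha]
      simp
    exact (smul_eq_zero.mp h2).resolve_left two_ne_zero
  have hCYX : ⁅⁅c, Y⁆, X⁆ = 0 := by simpa [hCXY] using hpol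
  -- basic facts
  have hXcX : ⁅X, ⁅c, X⁆⁆ = 0 := by rw [← lie_skew, hD X hX, neg_zero]
  have hYcY : ⁅Y, ⁅c, Y⁆⁆ = 0 := by rw [← lie_skew, hD Y hY, neg_zero]
  have hXcY : ⁅X, ⁅c, Y⁆⁆ = 0 := by rw [← lie_skew, hCYX, neg_zero]
  have hYcX : ⁅Y, ⁅c, X⁆⁆ = 0 := by rw [← lie_skew, hCXY, neg_zero]
  -- centralizer-like submodule
  let K : Submodule ℝ L :=
  { carrier := {z | ⁅c, z⁆ = 0 ∧ ⁅X, z⁆ = 0 ∧ ⁅Y, z⁆ = 0}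
    add_mem' := by
      rintro a b ⟨h1, h2, h3⟩ ⟨h4, h5, h6⟩
      refine ⟨?_, ?_, ?_⟩ <;> simp [lie_add, h1, h2, h3, h4, h5, h6]
    zero_mem' := by simp
    smul_mem' := by
      rintro t a ⟨h1, h2, h3⟩
      refine ⟨?_, ?_, ?_⟩ <;> simp [lie_smul, h1, h2, h3] }
  have hKmem : ∀ z, z ∈ K ↔ (⁅c, z⁆ = 0 ∧ ⁅X, z⁆ = 0 ∧ ⁅Y, z⁆ = 0) := fun z => Iff.rfl
  -- generator pair brackets lie in K
  have hgen : ∀ a ∈ ({c, X, Y} : Set L), ∀ b ∈ ({c, X, Y} : Set L), ⁅a, b⁆ ∈ K := by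
    have hcX : ⁅c, X⁆ ∈ K := ⟨hD2X, hXcX, hYcX⟩
    have hcY : ⁅c, Y⁆ ∈ K := ⟨hD2Y, hXcY, hYcY⟩
    have hXYK : ⁅X, Y⁆ ∈ K :=
      ⟨hDbr, h2step X hX X hX Y hY, h2step Y hY X hX Y hY⟩
    rintro a (rfl | rfl | rfl) b (rfl | rfl | rfl)
    · simp only [lie_self]; exact K.zero_mem
    · exact hcX
    · exact hcY
    · rw [← lie_skew]; exact K.neg_mem hcX
    · simp only [lie_self]; exact K.zero_mem
    · exact hXYK
    · rw [← lie_skew]; exact K.neg_mem hcY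
    · rw [← lie_skew]; exact K.neg_mem hXYK
    · simp only [lie_self]; exact K.zero_mem
  intro w₁ hw₁ w₂ hw₂ w₃ hw₃
  -- step 1 : ⁅w₂, w₃⁆ ∈ K
  have hbr : ⁅w₂, w₃⁆ ∈ K := by
    induction hw₂ using Submodule.span_induction with
    | mem a ha =>
      induction hw₃ using Submodule.span_induction with
      | mem b hb => exact hgen a ha b hb
      | zero => simp only [lie_zero]; exact K.zero_mem
      | add x y hx hy ihx ihy => rw [lie_add]; exact K.add_mem ihx ihy
      | smul t x hx ih => rw [lie_smul]; exact K.smul_mem t ih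
    | zero => simp only [zero_lie]; exact K.zero_mem
    | add x y hx hy ihx ihy => rw [add_lie]; exact K.add_mem ihx ihy
    | smul t x hx ih => rw [smul_lie]; exact K.smul_mem t ih
  -- step 2 : ⁅w₁, z⁆ = 0 for z ∈ K
  revert hbr
  generalize ⁅w₂, w₃⁆ = z
  intro hz
  obtain ⟨h1, h2, h3⟩ := hz
  induction hw₁ using Submodule.span_induction with
  | mem a ha =>
    rcases ha with rfl | rfl | rfl
    · exact h1
    · exact h2
    · exact h3
  | zero => simp
  | add x y hx hy ihx ihy => rw [add_lie, ihx, ihy, add_zero]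
  | smul t x hx ih => rw [smul_lie, ih, smul_zero]
end

section
/- Let V be a finite-dimensional real inner product space and let S be a nonzero symmetric endomorphism of V such that for some nonzero v ∈ V, ⟨S y, y⟩ = 0 for all y orthogonal to v. Then there exists t ∈ V with S = t ⊗ v* + v ⊗ t*, i.e., S y = ⟨v,y⟩ t + ⟨t,y⟩ v for all y ∈ V. -/
/-! Polarizing the vanishing quadratic form `y ↦ ⟪S y, y⟫` on `v⊥` shows that `S` maps `v⊥` into
`v⊥⊥ = ℝ ∙ v`. Together with the value of `S` at `v`, this pins `S` down as
`t ⊗ v* + v ⊗ t*` with `t = S v / ‖v‖² - (⟪v, S v⟫ / (2 ‖v‖⁴)) v`. -/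

open scoped RealInnerProductSpace

namespace LinearMap.IsSymmetric

variable {V : Type*} [NormedAddCommGroup V] [InnerProductSpace ℝ V] {S : V →ₗ[ℝ] V}

theorem inner_map_eq_zero_of_forall_mem {K : Submodule ℝ V} (hS : S.IsSymmetric)
    (h : ∀ y ∈ K, ⟪S y, y⟫ = 0) {x y : V} (hx : x ∈ K) (hy : y ∈ K) : ⟪S x, y⟫ = 0 := by
  have hxy := h (x + y) (K.add_mem hx hy)
  rw [map_add, inner_add_left, inner_add_right, inner_add_right, h x hx, h y hy, hS y x,
    real_inner_comm (S x) y] at hxy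
  linarith

theorem map_mem_orthogonal_of_forall_mem {K : Submodule ℝ V} (hS : S.IsSymmetric)
    (h : ∀ y ∈ K, ⟪S y, y⟫ = 0) {x : V} (hx : x ∈ K) : S x ∈ Kᗮ := fun y hy => by
  rw [real_inner_comm]
  exact hS.inner_map_eq_zero_of_forall_mem h hx hy

theorem exists_map_eq_smul_of_inner_eq_zero (hS : S.IsSymmetric) {v : V}
    (h : ∀ y : V, ⟪v, y⟫ = 0 → ⟪S y, y⟫ = 0) {w : V} (hw : ⟪v, w⟫ = 0) :
    ∃ c : ℝ, S w = c • v := by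
  have hK : ∀ y ∈ (ℝ ∙ v)ᗮ, ⟪S y, y⟫ = 0 := fun y hy =>
    h y (Submodule.mem_orthogonal_singleton_iff_inner_right.mp hy)
  have hSw := hS.map_mem_orthogonal_of_forall_mem hK
    (Submodule.mem_orthogonal_singleton_iff_inner_right.mpr hw)
  rw [Submodule.orthogonal_orthogonal, Submodule.mem_span_singleton] at hSw
  obtain ⟨c, hc⟩ := hSw
  exact ⟨c, hc.symm⟩

theorem exists_eq_smul_add_smul_of_map_orthogonal (hS : S.IsSymmetric) {v : V} (hv : v ≠ 0)
    (hSv : ∀ w : V, ⟪v, w⟫ = 0 → ∃ c : ℝ, S w = c • v) :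
    ∃ t : V, ∀ y : V, S y = ⟪v, y⟫ • t + ⟪t, y⟫ • v := by
  set n : ℝ := ⟪v, v⟫
  have hn : n ≠ 0 := inner_self_ne_zero.mpr hv
  refine ⟨n⁻¹ • S v - (⟪v, S v⟫ / (2 * n ^ 2)) • v, fun y => ?_⟩
  obtain ⟨a, hay⟩ : ∃ a : ℝ, ⟪v, y⟫ = a * n := ⟨⟪v, y⟫ / n, by field_simp⟩
  have hw : ⟪v, y - a • v⟫ = 0 := by
    rw [inner_sub_right, real_inner_smul_right, hay]; ring
  obtain ⟨c, hc⟩ := hSv _ hw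
  have hcn : c * n = ⟪S v, y⟫ - a * ⟪v, S v⟫ := by
    have := congrArg (⟪·, v⟫) hc
    simp only [hS _ v, real_inner_smul_left, inner_sub_left, real_inner_comm (S v) y] at this
    rw [← this]
  have hSy : S y = a • S v + c • v := by
    rw [← hc, ← map_smul, ← map_add, add_sub_cancel]
  rw [hSy, inner_sub_left, real_inner_smul_left, real_inner_smul_left, hay]
  match_scalars
  · field_simp
  · field_simp
    linear_combination 2 * hcn

end LinearMap.IsSymmetric

theorem stmt_19_general (V : Type*) [NormedAddCommGroup V] [InnerProductSpace ℝ V]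
    (S : V →ₗ[ℝ] V) (hS : ∀ x y : V, ⟪S x, y⟫ = ⟪x, S y⟫)
    (v : V) (hv : v ≠ 0)
    (h : ∀ y : V, ⟪v, y⟫ = 0 → ⟪S y, y⟫ = 0) :
    ∃ t : V, ∀ y : V, S y = ⟪v, y⟫ • t + ⟪t, y⟫ • v :=
  LinearMap.IsSymmetric.exists_eq_smul_add_smul_of_map_orthogonal hS hv fun _ hw =>
    LinearMap.IsSymmetric.exists_map_eq_smul_of_inner_eq_zero hS h hw

theorem stmt_19 (V : Type*) [NormedAddCommGroup V] [InnerProductSpace ℝ V]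
    [FiniteDimensional ℝ V] (S : V →ₗ[ℝ] V) (hS : ∀ x y : V, ⟪S x, y⟫ = ⟪x, S y⟫)
    (hS0 : S ≠ 0) (v : V) (hv : v ≠ 0)
    (h : ∀ y : V, ⟪v, y⟫ = 0 → ⟪S y, y⟫ = 0) :
    ∃ t : V, ∀ y : V, S y = ⟪v, y⟫ • t + ⟪t, y⟫ • v :=
  stmt_19_general V S hS v hv h
end
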